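/- The modular curve X₀(N) has genus at most two if and only if N ≤ 29 or N ∈ {31, 32, 36, 37, 49, 50}. -/

import Mathlib

open Finset

/-- Index `μ(N) = N·∏_{p∣N}(1 + 1/p)` of `Γ₀(N)` in `PSL₂(ℤ)`. -/
noncomputable def gamma0Index (N : ℕ) : ℚ :=
  (N : ℚ) * ∏ p ∈ N.primeFactors, (1 + 1 / (p : ℚ))

/-- The symbol `(−1/p)`. -/
def chiFour (p : ℕ) : ℚ :=
  if p % 4 = 1 then 1 else if p % 4 = 3 then -1 else 0

/-- The symbol `(−3/p)`. -/
def chiThree (p : ℕ) : ℚ :=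
  if p % 3 = 1 then 1 else if p % 3 = 2 then -1 else 0

/-- Number `ν₂(N)` of elliptic points of order 2 on `X₀(N)`. -/
noncomputable def nuTwo (N : ℕ) : ℚ :=
  if 4 ∣ N then 0 else ∏ p ∈ N.primeFactors, (1 + chiFour p)

/-- Number `ν₃(N)` of elliptic points of order 3 on `X₀(N)`. -/
noncomputable def nuThree (N : ℕ) : ℚ :=
  if 9 ∣ N then 0 else ∏ p ∈ N.primeFactors, (1 + chiThree p)

/-- Number `ν_∞(N)` of cusps of `X₀(N)`. -/
noncomputable def nuInf (N : ℕ) : ℚ :=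
  ∑ d ∈ N.divisors, (Nat.totient (Nat.gcd d (N / d)) : ℚ)

/-- Genus of the modular curve `X₀(N)`. -/
noncomputable def genusX0 (N : ℕ) : ℚ :=
  1 + gamma0Index N / 12 - nuTwo N / 4 - nuThree N / 3 - nuInf N / 2

/-! For `N ≥ 196` the elliptic and cuspidal terms are too small to compensate the index.
Indeed `ν₂(N), ν₃(N) ≤ 2^ω(N)`, and both `2^ω` and `ν_∞` are multiplicative functions `f` with
`f(p^e)² p^e ≤ μ(p^e)²` at prime powers; as `μ` is multiplicative too, `f(N) ≤ μ(N)/√N ≤ μ(N)/14`.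
Hence `g(N) ≥ 1 + μ(N)/12 - (1/4 + 1/3 + 1/2) μ(N)/14 = 1 + μ(N)/168 > 2`, because `μ(N) ≥ N`.
The finitely many `N < 196` are settled by evaluating the genus formula. -/

open scoped Nat

lemma Nat.Coprime.prod_primeFactors_mul {M : Type*} [CommMonoid M] {m n : ℕ} (h : m.Coprime n)
    (g : ℕ → M) :
    ∏ p ∈ (m * n).primeFactors, g p =
      (∏ p ∈ m.primeFactors, g p) * ∏ p ∈ n.primeFactors, g p := by
  rw [h.primeFactors_mul, prod_union h.disjoint_primeFactors]

lemma gamma0Index_mul {m n : ℕ} (h : m.Coprime n) :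
    gamma0Index (m * n) = gamma0Index m * gamma0Index n := by
  simp only [gamma0Index, h.prod_primeFactors_mul _, Nat.cast_mul]
  ring

lemma gamma0Index_prime_pow {p : ℕ} (hp : p.Prime) (e : ℕ) :
    gamma0Index (p ^ (e + 1)) = p ^ e * (p + 1) := by
  have hp0 : (p : ℚ) ≠ 0 := by exact_mod_cast hp.ne_zero
  rw [gamma0Index, Nat.primeFactors_prime_pow e.succ_ne_zero hp, prod_singleton]
  field_simp
  push_cast
  ring

lemma le_gamma0Index (N : ℕ) : (N : ℚ) ≤ gamma0Index N := by
  have h : 1 ≤ ∏ p ∈ N.primeFactors, (1 + 1 / (p : ℚ)) :=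
    one_le_prod fun p _ => le_add_of_nonneg_right (by positivity)
  simpa [gamma0Index] using mul_le_mul_of_nonneg_left h (Nat.cast_nonneg (α := ℚ) N)

lemma sq_mul_le_gamma0Index_sq {f : ℕ → ℚ}
    (hmul : ∀ {m n : ℕ}, m.Coprime n → f (m * n) = f m * f n)
    (hpow : ∀ p e : ℕ, p.Prime → f (p ^ (e + 1)) ^ 2 * p ^ (e + 1) ≤
      gamma0Index (p ^ (e + 1)) ^ 2)
    {N : ℕ} (hN : N ≠ 0) : f N ^ 2 * N ≤ gamma0Index N ^ 2 := by
  induction N using Nat.recOnPosPrimePosCoprime with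
  | prime_pow p n hp hn =>
    obtain ⟨e, rfl⟩ := Nat.exists_eq_add_of_lt hn
    simpa using hpow p e hp
  | zero => exact absurd rfl hN
  | one =>
    have h1 : f 1 = f 1 * f 1 := by simpa using hmul (Nat.coprime_one_left 1)
    simp only [gamma0Index, Nat.primeFactors_one, prod_empty, Nat.cast_one, mul_one, one_pow]
    nlinarith [sq_nonneg (f 1 - 1)]
  | coprime a b ha hb hab iha ihb =>
    rw [hmul hab, gamma0Index_mul hab, Nat.cast_mul]
    calc (f a * f b) ^ 2 * (a * b) = (f a ^ 2 * a) * (f b ^ 2 * b) := by ring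
      _ ≤ gamma0Index a ^ 2 * gamma0Index b ^ 2 :=
        mul_le_mul (iha (by omega)) (ihb (by omega)) (by positivity) (by positivity)
      _ = (gamma0Index a * gamma0Index b) ^ 2 := by ring

lemma four_mul_le_add_one_sq (x : ℚ) : 4 * x ≤ (x + 1) ^ 2 := by
  nlinarith [sq_nonneg (x - 1)]

lemma sq_prod_two_mul_le_gamma0Index_sq {N : ℕ} (hN : N ≠ 0) :
    (∏ _p ∈ N.primeFactors, (2 : ℚ)) ^ 2 * N ≤ gamma0Index N ^ 2 := by
  refine sq_mul_le_gamma0Index_sq (f := fun N => ∏ _p ∈ N.primeFactors, (2 : ℚ))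
    (fun h => h.prod_primeFactors_mul _) (fun p e hp => ?_) hN
  have hp1 : (1 : ℚ) ≤ p := by exact_mod_cast hp.one_lt.le
  rw [Nat.primeFactors_prime_pow e.succ_ne_zero hp, prod_singleton, gamma0Index_prime_pow hp]
  calc (2 : ℚ) ^ 2 * p ^ (e + 1) = p ^ e * (4 * p) := by ring
    _ ≤ p ^ (e + e) * (p + 1) ^ 2 :=
      mul_le_mul (pow_le_pow_right₀ hp1 (by omega)) (four_mul_le_add_one_sq p)
        (by positivity) (by positivity)
    _ = (p ^ e * (p + 1)) ^ 2 := by ring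

lemma prod_one_add_le_prod_two {χ : ℕ → ℚ} (hχ : ∀ p, -1 ≤ χ p ∧ χ p ≤ 1)
    (s : Finset ℕ) :
    ∏ p ∈ s, (1 + χ p) ≤ ∏ _p ∈ s, 2 :=
  prod_le_prod (fun p _ => by linarith [hχ p]) (fun p _ => by linarith [hχ p])

lemma nuTwo_le_prod_two (N : ℕ) : nuTwo N ≤ ∏ _p ∈ N.primeFactors, (2 : ℚ) := by
  unfold nuTwo
  split_ifs
  · positivity
  · exact prod_one_add_le_prod_two (fun p => by unfold chiFour; split_ifs <;> norm_num) _

lemma nuThree_le_prod_two (N : ℕ) : nuThree N ≤ ∏ _p ∈ N.primeFactors, (2 : ℚ) := by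
  unfold nuThree
  split_ifs
  · positivity
  · exact prod_one_add_le_prod_two (fun p => by unfold chiThree; split_ifs <;> norm_num) _

lemma Nat.gcd_mul_mul_of_coprime {a b c d : ℕ} (h : (a * c).Coprime (b * d)) :
    Nat.gcd (a * b) (c * d) = Nat.gcd a c * Nat.gcd b d := by
  have hbc : b.Coprime c := h.coprime_mul_left.coprime_mul_right_right.symm
  have had : a.Coprime d := h.coprime_mul_right.coprime_mul_left_right
  have hcd : c.Coprime d := h.coprime_mul_left.coprime_mul_left_right
  rw [hcd.gcd_mul, hbc.gcd_mul_right_cancel, had.gcd_mul_left_cancel]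

lemma nuInf_mul {m n : ℕ} (h : m.Coprime n) : nuInf (m * n) = nuInf m * nuInf n := by
  rw [nuInf, h.divisors_mul, sum_map, nuInf, nuInf, sum_mul_sum, ← sum_product']
  refine (sum_attach (m.divisors ×ˢ n.divisors) fun x =>
    (φ (Nat.gcd (x.1 * x.2) (m * n / (x.1 * x.2))) : ℚ)).trans
    (sum_congr rfl fun ⟨a, b⟩ hab => ?_)
  obtain ⟨⟨ha, -⟩, ⟨hb, -⟩⟩ := by simpa only [mem_product, Nat.mem_divisors] using hab
  have hmn : (a * (m / a)).Coprime (b * (n / b)) := by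
    rwa [Nat.mul_div_cancel' ha, Nat.mul_div_cancel' hb]
  have hgcd : (Nat.gcd a (m / a)).Coprime (Nat.gcd b (n / b)) :=
    (hmn.coprime_dvd_left ((Nat.gcd_dvd_left _ _).trans (dvd_mul_right _ _))).coprime_dvd_right
      ((Nat.gcd_dvd_left _ _).trans (dvd_mul_right _ _))
  rw [← Nat.div_mul_div_comm ha hb, Nat.gcd_mul_mul_of_coprime hmn, Nat.totient_mul hgcd,
    Nat.cast_mul]

lemma sum_totient_prime_pow {p : ℕ} (hp : p.Prime) (n : ℕ) :
    ∑ i ∈ range (n + 1), φ (p ^ i) = p ^ n := by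
  rw [← Nat.sum_divisors_prime_pow hp, Nat.sum_totient]

lemma nuInf_prime_pow {p : ℕ} (hp : p.Prime) {s t : ℕ} (hts : t ≤ s) (hst : s ≤ t + 1) :
    nuInf (p ^ (s + t + 1)) = p ^ s + p ^ t := by
  have hdiv : ∀ i ≤ s + t + 1, p ^ (s + t + 1) / p ^ i = p ^ (s + t + 1 - i) :=
    fun i hi => Nat.pow_div hi hp.pos
  have hlow : ∑ i ∈ range (s + 1), φ (Nat.gcd (p ^ i) (p ^ (s + t + 1) / p ^ i)) = p ^ s := by
    rw [← sum_totient_prime_pow hp s]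
    refine sum_congr rfl fun i hi => ?_
    rw [mem_range] at hi
    rw [hdiv i (by omega), Nat.gcd_eq_left (pow_dvd_pow p (by omega))]
  have hhigh : ∑ k ∈ range (t + 1),
      φ (Nat.gcd (p ^ (s + 1 + k)) (p ^ (s + t + 1) / p ^ (s + 1 + k))) = p ^ t := by
    rw [← sum_totient_prime_pow hp t, ← sum_range_reflect]
    refine sum_congr rfl fun k hk => ?_
    rw [mem_range] at hk
    rw [hdiv _ (by omega), Nat.gcd_eq_right (pow_dvd_pow p (by omega))]
    congr 2
    omega
  have hsum : ∑ d ∈ (p ^ (s + t + 1)).divisors, φ (Nat.gcd d (p ^ (s + t + 1) / d)) =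
      p ^ s + p ^ t := by
    rw [Nat.sum_divisors_prime_pow hp,
      ← sum_range_add_sum_Ico _ (by omega : s + 1 ≤ s + t + 1 + 1), sum_Ico_eq_sum_range,
      show s + t + 1 + 1 - (s + 1) = t + 1 by omega, hlow, hhigh]
  rw [nuInf]
  exact_mod_cast hsum

lemma sq_nuInf_mul_le_gamma0Index_sq {N : ℕ} (hN : N ≠ 0) :
    nuInf N ^ 2 * N ≤ gamma0Index N ^ 2 := by
  refine sq_mul_le_gamma0Index_sq nuInf_mul (fun p e hp => ?_) hN
  rw [gamma0Index_prime_pow hp]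
  obtain ⟨k, rfl | rfl⟩ := Nat.even_or_odd' e
  · rw [show 2 * k + 1 = k + k + 1 by ring, nuInf_prime_pow hp le_rfl (by omega)]
    calc ((p : ℚ) ^ k + p ^ k) ^ 2 * p ^ (k + k + 1) = p ^ (4 * k) * (4 * p) := by ring
      _ ≤ p ^ (4 * k) * (p + 1) ^ 2 :=
        mul_le_mul_of_nonneg_left (four_mul_le_add_one_sq p) (by positivity)
      _ = (p ^ (2 * k) * (p + 1)) ^ 2 := by ring
  · rw [show 2 * k + 1 + 1 = (k + 1) + k + 1 by ring, nuInf_prime_pow hp (by omega) le_rfl]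
    exact le_of_eq (by ring)

lemma two_lt_genusX0 {N : ℕ} (hN : 196 ≤ N) : 2 < genusX0 N := by
  have hN0 : N ≠ 0 := by omega
  have h196 : (196 : ℚ) ≤ N := by exact_mod_cast hN
  have hμ : (N : ℚ) ≤ gamma0Index N := le_gamma0Index N
  have le_of_sq_mul_le (x : ℚ) (hx : x ^ 2 * N ≤ gamma0Index N ^ 2) :
      14 * x ≤ gamma0Index N :=
    (le_abs_self _).trans (abs_le_of_sq_le_sq
      (by nlinarith [mul_le_mul_of_nonneg_left h196 (sq_nonneg x)]) (by linarith))
  have hprod := le_of_sq_mul_le _ (sq_prod_two_mul_le_gamma0Index_sq hN0)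
  have hInf := le_of_sq_mul_le _ (sq_nuInf_mul_le_gamma0Index_sq hN0)
  have hTwo := nuTwo_le_prod_two N
  have hThree := nuThree_le_prod_two N
  rw [genusX0]
  linarith

lemma genusX0_le_two_iff_of_lt_196 :
    ∀ N < 196, genusX0 N ≤ 2 ↔ N ≤ 29 ∨ N ∈ ({31, 32, 36, 37, 49, 50} : Finset ℕ) :=
  by decide +kernel

theorem genusX0_le_two_iff_general (N : ℕ) :
    genusX0 N ≤ 2 ↔ N ≤ 29 ∨ N ∈ ({31, 32, 36, 37, 49, 50} : Finset ℕ) := by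
  rcases lt_or_ge N 196 with hN | hN
  · exact genusX0_le_two_iff_of_lt_196 N hN
  · exact iff_of_false (two_lt_genusX0 hN).not_ge (by simp; omega)

/-- The modular curve `X₀(N)` has genus at most two iff `N ≤ 29` or
`N ∈ {31, 32, 36, 37, 49, 50}`. -/
theorem genusX0_le_two_iff (N : ℕ) (hN : 1 ≤ N) :
    genusX0 N ≤ 2 ↔ N ≤ 29 ∨ N ∈ ({31, 32, 36, 37, 49, 50} : Finset ℕ) :=
  genusX0_le_two_iff_general N
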